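/- arXiv:2003.05140 — 2 statements merged into one kernel-verified Lean document; each statement's English description precedes it below -/
import Mathlib

section
/- For every β ≥ 0, every real sequence ω = (ω_n)_{n≥1}, every ρ ∈ (0,1] and all N_1, N_2 ∈ ℕ: Ẑ_{N_1+N_2, ω}(ρ) ≥ Ẑ_{N_1, ω}(ρ) · Ẑ_{N_2, θ^{N_1}ω}(ρ), where Ẑ_{N,ω}(ρ) := min over m ∈ {⌊ρN⌋, ⌈ρN⌉} of 𝒵_{N,m,ω,β}, and (θ^k ω)_n := ω_{n+k}. -/
/-!
Splitting the expectation according to the first `m` increments gives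
`𝒵_{N,m,ω,β} = ∑ ∏ᵢ K(aᵢ) · exp (β ∑_{k ≤ m} ω_{a₁ + ⋯ + a_k})`, the sum running over the
tuples `(a₁, …, a_m)` with sum `N`. Concatenating a tuple for `(N₁, m₁, ω)` with one for
`(N₂, m₂, θ^{N₁} ω)` gives a tuple for `(N₁ + N₂, m₁ + m₂, ω)` whose weight is the product of
the two weights, so `𝒵_{N₁+N₂, m₁+m₂, ω} ≥ 𝒵_{N₁, m₁, ω} · 𝒵_{N₂, m₂, θ^{N₁} ω}`.
Since `⌊ρN₁⌋ + ⌊ρN₂⌋ ≤ ⌊ρ(N₁+N₂)⌋ ≤ ⌈ρ(N₁+N₂)⌉ ≤ ⌈ρN₁⌉ + ⌈ρN₂⌉` and `⌈x⌉ ≤ ⌊x⌋ + 1`,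
both roundings of `ρ(N₁+N₂)` split as `m₁ + m₂` with `mᵢ` a rounding of `ρNᵢ`.
-/

section FloorCeil

variable {R : Type*} [Semiring R] [LinearOrder R] [IsStrictOrderedRing R] [FloorSemiring R]

lemma Nat.floor_add_floor_le {a b : R} (ha : 0 ≤ a) (hb : 0 ≤ b) :
    ⌊a⌋₊ + ⌊b⌋₊ ≤ ⌊a + b⌋₊ :=
  Nat.le_floor (by push_cast; exact _root_.add_le_add (Nat.floor_le ha) (Nat.floor_le hb))

lemma Nat.exists_floor_or_ceil_add_eq (a b : R) {n : ℕ} (hlo : ⌊a⌋₊ + ⌊b⌋₊ ≤ n)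
    (hhi : n ≤ ⌈a⌉₊ + ⌈b⌉₊) :
    ∃ m₁ m₂, (m₁ = ⌊a⌋₊ ∨ m₁ = ⌈a⌉₊) ∧ (m₂ = ⌊b⌋₊ ∨ m₂ = ⌈b⌉₊) ∧ m₁ + m₂ = n := by
  have := Nat.ceil_le_floor_add_one a
  have := Nat.ceil_le_floor_add_one b
  have := Nat.floor_le_ceil b
  by_cases h : n ≤ ⌊a⌋₊ + ⌈b⌉₊
  · exact ⟨⌊a⌋₊, n - ⌊a⌋₊, .inl rfl, by omega, by omega⟩
  · exact ⟨⌈a⌉₊, n - ⌈a⌉₊, .inr rfl, by omega, by omega⟩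

lemma min_floor_ceil_mul_le {S : Type*} [Semiring S] [LinearOrder S] [IsOrderedRing S]
    {f g h : ℕ → S} (hf : ∀ n, 0 ≤ f n) (hg : ∀ n, 0 ≤ g n)
    (hfgh : ∀ m₁ m₂, f m₁ * g m₂ ≤ h (m₁ + m₂)) {a b : R} (ha : 0 ≤ a) (hb : 0 ≤ b) :
    min (f ⌊a⌋₊) (f ⌈a⌉₊) * min (g ⌊b⌋₊) (g ⌈b⌉₊) ≤ min (h ⌊a + b⌋₊) (h ⌈a + b⌉₊) := by
  have hle {n : ℕ} (hlo : ⌊a⌋₊ + ⌊b⌋₊ ≤ n) (hhi : n ≤ ⌈a⌉₊ + ⌈b⌉₊) :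
      min (f ⌊a⌋₊) (f ⌈a⌉₊) * min (g ⌊b⌋₊) (g ⌈b⌉₊) ≤ h n := by
    obtain ⟨m₁, m₂, h₁, h₂, rfl⟩ := Nat.exists_floor_or_ceil_add_eq a b hlo hhi
    have hf₁ : min (f ⌊a⌋₊) (f ⌈a⌉₊) ≤ f m₁ := by rcases h₁ with rfl | rfl <;> simp
    have hg₂ : min (g ⌊b⌋₊) (g ⌈b⌉₊) ≤ g m₂ := by rcases h₂ with rfl | rfl <;> simp
    exact (mul_le_mul hf₁ hg₂ (le_min (hg _) (hg _)) (hf _)).trans (hfgh m₁ m₂)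
  have hfloor := Nat.floor_add_floor_le ha hb
  have hceil := Nat.ceil_add_le a b
  have hfloor_ceil := Nat.floor_le_ceil (a + b)
  exact le_min (hle hfloor (by omega)) (hle (by omega) hceil)

end FloorCeil

open Finset

open scoped Classical in
lemma StrictMono.sum_Icc_mul_ite_mem_range {f : ℕ → ℕ} (hf : StrictMono f) (hf0 : f 0 = 0)
    (ω : ℕ → ℝ) (m : ℕ) :
    ∑ j ∈ Icc 1 (f m), ω j * (if ∃ k, f k = j then (1 : ℝ) else 0) =
      ∑ k ∈ range m, ω (f (k + 1)) := by
  have hrange : (Icc 1 (f m)).filter (fun j => ∃ k, f k = j) = (range m).image (f ∘ (· + 1)) := by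
    ext j
    simp only [mem_filter, mem_Icc, mem_image, mem_range, Function.comp_apply]
    constructor
    · rintro ⟨⟨hj1, hjm⟩, k, rfl⟩
      obtain ⟨k, rfl⟩ := Nat.exists_eq_add_one.mpr (hf.lt_iff_lt.mp (by omega : f 0 < f k))
      exact ⟨k, by have := hf.le_iff_le.mp hjm; omega, rfl⟩
    · rintro ⟨k, hk, rfl⟩
      have := hf (by omega : 0 < k + 1)
      exact ⟨⟨by omega, hf.monotone hk⟩, k + 1, rfl⟩
  simp only [mul_ite, mul_one, mul_zero]
  rw [← sum_filter, hrange, sum_image fun k _ l _ h => by simpa using hf.injective h]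
  rfl

open MeasureTheory ProbabilityTheory

lemma integral_indicator_comp_eq_sum {Ω α : Type*} [MeasurableSpace Ω] [MeasurableSpace α]
    [MeasurableSingletonClass α] {μ : Measure Ω} [IsFiniteMeasure μ] {X : Ω → α}
    (hX : Measurable X) (s : Finset α) (g : α → ℝ) :
    ∫ x, (s : Set α).indicator g (X x) ∂μ = ∑ a ∈ s, μ.real (X ⁻¹' {a}) * g a := by
  have hsum (x : Ω) : (s : Set α).indicator g (X x) =
      ∑ a ∈ s, (X ⁻¹' {a}).indicator (fun _ => g a) x := by
    classical
    simp only [Set.indicator_apply, Set.mem_preimage, Set.mem_singleton_iff, mem_coe,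
      sum_ite_eq]
  simp_rw [hsum]
  rw [integral_finsetSum _ fun a _ =>
    (integrable_const _).indicator (hX (measurableSet_singleton a))]
  exact sum_congr rfl fun a _ => by
    rw [integral_indicator_const _ (hX (measurableSet_singleton a)), smul_eq_mul]

lemma measureReal_tuple_preimage_singleton {Ω E : Type*} [MeasurableSpace Ω] [MeasurableSpace E]
    [MeasurableSingletonClass E] {P : Measure Ω} [IsProbabilityMeasure P] {η : ℕ → Ω → E}
    (hmeas : ∀ j, Measurable (η j)) (hindep : iIndepFun η P)
    (hident : ∀ j, P.map (η j) = P.map (η 0)) {m : ℕ} (a : Fin m → E) :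
    P.real ((fun x (i : Fin m) => η i x) ⁻¹' {a}) = ∏ i, P.real (η 0 ⁻¹' {a i}) := by
  have hmap := (hindep.precomp Fin.val_injective).map_fun_eq_pi_map
    fun i : Fin m => (hmeas i).aemeasurable
  rw [measureReal_def, ← Measure.map_apply (f := fun x (i : Fin m) => η i x)
    (measurable_pi_lambda _ fun i => hmeas i) (measurableSet_singleton a), hmap,
    Measure.pi_singleton, ENNReal.toReal_prod]
  refine prod_congr rfl fun i _ => ?_
  rw [hident, Measure.map_apply (hmeas 0) (measurableSet_singleton _), measureReal_def]

namespace PinningModel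

def partialSum {m : ℕ} (a : Fin m → ℕ) (k : ℕ) : ℕ :=
  ∑ i : Fin m, if (i : ℕ) < k then a i else 0

lemma partialSum_eq_sum_range (f : ℕ → ℕ) {m k : ℕ} (hk : k ≤ m) :
    partialSum (fun i : Fin m => f i) k = ∑ j ∈ range k, f j := by
  rw [partialSum, Fin.sum_univ_eq_sum_range (fun j => if j < k then f j else 0),
    ← sum_range_add_sum_Ico _ hk, sum_congr rfl fun j hj => if_pos (mem_range.mp hj),
    sum_eq_zero fun j hj => if_neg (mem_Ico.mp hj).1.not_gt, add_zero]

lemma partialSum_append_of_le {m₁ m₂ : ℕ} (a : Fin m₁ → ℕ) (b : Fin m₂ → ℕ) {k : ℕ}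
    (hk : k ≤ m₁) : partialSum (Fin.append a b) k = partialSum a k := by
  simp only [partialSum, Fin.sum_univ_add, Fin.val_castAdd, Fin.append_left, Fin.val_natAdd,
    Fin.append_right]
  exact add_eq_left.mpr (sum_eq_zero fun i _ => if_neg (by omega))

lemma partialSum_append_add {m₁ m₂ : ℕ} (a : Fin m₁ → ℕ) (b : Fin m₂ → ℕ) (k : ℕ) :
    partialSum (Fin.append a b) (m₁ + k) = ∑ i, a i + partialSum b k := by
  rw [partialSum, Fin.sum_univ_add, sum_congr rfl fun i _ => if_pos (by simp; omega)]
  simp [partialSum]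

noncomputable def pinningEnergy (ω : ℕ → ℝ) {m : ℕ} (a : Fin m → ℕ) : ℝ :=
  ∑ k ∈ range m, ω (partialSum a (k + 1))

lemma pinningEnergy_append (ω : ℕ → ℝ) {m₁ m₂ : ℕ} (a : Fin m₁ → ℕ) (b : Fin m₂ → ℕ) :
    pinningEnergy ω (Fin.append a b) =
      pinningEnergy ω a + pinningEnergy (fun n => ω (n + ∑ i, a i)) b := by
  rw [pinningEnergy, sum_range_add]
  congr 1
  · exact sum_congr rfl fun k hk =>
      by rw [partialSum_append_of_le _ _ (mem_range.mp hk)]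
  · refine sum_congr rfl fun k _ => ?_
    rw [add_assoc, partialSum_append_add, add_comm]

noncomputable def partitionSum (p : ℕ → ℝ) (β : ℝ) (ω : ℕ → ℝ) (N m : ℕ) : ℝ :=
  ∑ a ∈ Nat.antidiagonalTuple m N, (∏ i, p (a i)) * Real.exp (β * pinningEnergy ω a)

lemma partitionSum_nonneg {p : ℕ → ℝ} (hp : ∀ n, 0 ≤ p n) (β : ℝ) (ω : ℕ → ℝ) (N m : ℕ) :
    0 ≤ partitionSum p β ω N m :=
  sum_nonneg fun _ _ => mul_nonneg (prod_nonneg fun _ _ => hp _) (Real.exp_pos _).le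

lemma partitionSum_mul_le {p : ℕ → ℝ} (hp : ∀ n, 0 ≤ p n) (β : ℝ) (ω : ℕ → ℝ)
    (N₁ N₂ m₁ m₂ : ℕ) :
    partitionSum p β ω N₁ m₁ * partitionSum p β (fun n => ω (n + N₁)) N₂ m₂ ≤
      partitionSum p β ω (N₁ + N₂) (m₁ + m₂) := by
  let e : (Fin m₁ → ℕ) × (Fin m₂ → ℕ) ↪ (Fin (m₁ + m₂) → ℕ) :=
    ⟨fun ab => Fin.append ab.1 ab.2, (Fin.appendEquiv m₁ m₂).injective⟩
  have he (a : Fin m₁ → ℕ) (b : Fin m₂ → ℕ) : e (a, b) = Fin.append a b := rfl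
  have hsub : (Nat.antidiagonalTuple m₁ N₁ ×ˢ Nat.antidiagonalTuple m₂ N₂).map e ⊆
      Nat.antidiagonalTuple (m₁ + m₂) (N₁ + N₂) := by
    simp only [subset_iff, mem_map, mem_product, Nat.mem_antidiagonalTuple]
    rintro _ ⟨⟨a, b⟩, ⟨ha, hb⟩, rfl⟩
    simp [he, Fin.sum_univ_add, ha, hb]
  rw [partitionSum, partitionSum, sum_mul_sum, ← sum_product']
  refine le_trans (le_of_eq ?_) (sum_le_sum_of_subset_of_nonneg hsub fun _ _ _ =>
    mul_nonneg (prod_nonneg fun _ _ => hp _) (Real.exp_pos _).le)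
  rw [sum_map]
  refine sum_congr rfl fun ⟨a, b⟩ hab => ?_
  have ha : ∑ i, a i = N₁ := Nat.mem_antidiagonalTuple.mp (mem_product.mp hab).1
  simp only [he, pinningEnergy_append, ha, Fin.prod_univ_add,
    Fin.append_left, Fin.append_right, mul_add, Real.exp_add]
  ring

open scoped Classical in
lemma exp_energy_mul_ite_eq_indicator {s : ℕ → ℕ} (hs : ∀ j, 1 ≤ s j) (ω : ℕ → ℝ) (β : ℝ)
    (N m : ℕ) :
    Real.exp (β * ∑ j ∈ Icc 1 N,
        ω j * (if ∃ k, ∑ i ∈ range k, s i = j then (1 : ℝ) else 0)) *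
      (if ∑ i ∈ range m, s i = N then (1 : ℝ) else 0) =
    (Nat.antidiagonalTuple m N : Set (Fin m → ℕ)).indicator
      (fun a => Real.exp (β * pinningEnergy ω a)) (fun i : Fin m => s i) := by
  have hmono : StrictMono fun k => ∑ i ∈ range k, s i :=
    strictMono_nat_of_lt_succ fun k => by rw [sum_range_succ]; linarith [hs k]
  have htotal : ∑ i : Fin m, s i = ∑ i ∈ range m, s i := Fin.sum_univ_eq_sum_range s m
  by_cases hN : ∑ i ∈ range m, s i = N
  · subst hN
    rw [if_pos rfl, mul_one, Set.indicator_of_mem (Nat.mem_antidiagonalTuple.mpr htotal),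
      hmono.sum_Icc_mul_ite_mem_range (sum_range_zero s), pinningEnergy]
    exact congrArg _ (congrArg _ (sum_congr rfl fun k hk =>
      by rw [partialSum_eq_sum_range s (mem_range.mp hk)]))
  · rw [if_neg hN, mul_zero, Set.indicator_of_notMem]
    rwa [mem_coe, Nat.mem_antidiagonalTuple, htotal]

open scoped Classical in
lemma integral_pinning_eq_partitionSum {Ω : Type*} [MeasurableSpace Ω] {P : Measure Ω}
    [IsProbabilityMeasure P] {η : ℕ → Ω → ℕ} (hmeas : ∀ j, Measurable (η j))
    (hindep : iIndepFun η P) (hident : ∀ j, P.map (η j) = P.map (η 0))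
    (hpos : ∀ j x, 1 ≤ η j x) (ω : ℕ → ℝ) (β : ℝ) (N m : ℕ) :
    ∫ x, Real.exp (β * ∑ j ∈ Icc 1 N,
        ω j * (if ∃ k, ∑ i ∈ range k, η i x = j then (1 : ℝ) else 0)) *
      (if ∑ i ∈ range m, η i x = N then (1 : ℝ) else 0) ∂P =
    partitionSum (fun n => P.real (η 0 ⁻¹' {n})) β ω N m := by
  simp_rw [exp_energy_mul_ite_eq_indicator (hpos · _)]
  rw [integral_indicator_comp_eq_sum (X := fun x (i : Fin m) => η i x)
    (measurable_pi_lambda _ fun i => hmeas i), partitionSum]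
  simp_rw [measureReal_tuple_preimage_singleton hmeas hindep hident]

end PinningModel

open MeasureTheory ProbabilityTheory Filter Set
open scoped ENNReal Classical

theorem stmt_17_general
    {Ω : Type*} [MeasurableSpace Ω] (P : Measure Ω) [IsProbabilityMeasure P]
    (η : ℕ → Ω → ℕ) (hηmeas : ∀ j, Measurable (η j))
    (hηindep : iIndepFun η P)
    (hηident : ∀ j, P.map (η j) = P.map (η 0))
    (hηpos : ∀ j x, 1 ≤ η j x)
    (τ : ℕ → Ω → ℕ) (hτ : ∀ m x, τ m x = ∑ j ∈ Finset.range m, η j x)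
    (𝒵 : ℕ → ℕ → (ℕ → ℝ) → ℝ → ℝ)
    (h𝒵 : ∀ N m (ω : ℕ → ℝ) (β : ℝ), 𝒵 N m ω β =
      ∫ x, Real.exp (β * ∑ j ∈ Finset.Icc 1 N,
          ω j * (if ∃ k, τ k x = j then (1:ℝ) else 0)) *
        (if τ m x = N then (1:ℝ) else 0) ∂P)
    :
    ∀ β : ℝ, 0 ≤ β → ∀ ω : ℕ → ℝ, ∀ ρ : ℝ, 0 < ρ → ρ ≤ 1 →
      ∀ N₁ N₂ : ℕ, 1 ≤ N₁ → 1 ≤ N₂ →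
        min (𝒵 (N₁ + N₂) ⌊ρ * ((N₁ + N₂ : ℕ) : ℝ)⌋₊ ω β)
            (𝒵 (N₁ + N₂) ⌈ρ * ((N₁ + N₂ : ℕ) : ℝ)⌉₊ ω β) ≥
          min (𝒵 N₁ ⌊ρ * (N₁ : ℝ)⌋₊ ω β) (𝒵 N₁ ⌈ρ * (N₁ : ℝ)⌉₊ ω β) *
          min (𝒵 N₂ ⌊ρ * (N₂ : ℝ)⌋₊ (fun n => ω (n + N₁)) β)
              (𝒵 N₂ ⌈ρ * (N₂ : ℝ)⌉₊ (fun n => ω (n + N₁)) β) := by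
  intro β _ ω ρ hρ _ N₁ N₂ _ _
  set p : ℕ → ℝ := fun n => P.real (η 0 ⁻¹' {n})
  have hp : ∀ n, 0 ≤ p n := fun _ => measureReal_nonneg
  have h𝒵_eq : ∀ N m ω', 𝒵 N m ω' β = PinningModel.partitionSum p β ω' N m := fun N m ω' => by
    simp only [h𝒵, hτ]
    exact PinningModel.integral_pinning_eq_partitionSum hηmeas hηindep hηident hηpos ω' β N m
  simp only [h𝒵_eq, Nat.cast_add, mul_add]
  exact min_floor_ceil_mul_le (PinningModel.partitionSum_nonneg hp β ω N₁)
    (PinningModel.partitionSum_nonneg hp β _ N₂) (PinningModel.partitionSum_mul_le hp β ω N₁ N₂)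
    (by positivity) (by positivity)

theorem stmt_17
    {Ω : Type*} [MeasurableSpace Ω] (P : Measure Ω) [IsProbabilityMeasure P]
    (η : ℕ → Ω → ℕ) (hηmeas : ∀ j, Measurable (η j))
    (hηindep : iIndepFun η P)
    (hηident : ∀ j, P.map (η j) = P.map (η 0))
    (hηpos : ∀ j x, 1 ≤ η j x)
    (α C_K : ℝ) (hα : 0 < α) (hCK : 0 < C_K)
    (K : ℕ → ℝ) (hK : ∀ n, K n = (P {x | η 0 x = n}).toReal)
    (hKpos : ∀ n, 1 ≤ n → 0 < K n)
    (hKasymp : Tendsto (fun n : ℕ => K n * (n : ℝ) ^ (1 + α)) atTop (nhds C_K))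
    (τ : ℕ → Ω → ℕ) (hτ : ∀ m x, τ m x = ∑ j ∈ Finset.range m, η j x)
    (𝒵 : ℕ → ℕ → (ℕ → ℝ) → ℝ → ℝ)
    (h𝒵 : ∀ N m (ω : ℕ → ℝ) (β : ℝ), 𝒵 N m ω β =
      ∫ x, Real.exp (β * ∑ j ∈ Finset.Icc 1 N,
          ω j * (if ∃ k, τ k x = j then (1:ℝ) else 0)) *
        (if τ m x = N then (1:ℝ) else 0) ∂P)
    :
    ∀ β : ℝ, 0 ≤ β → ∀ ω : ℕ → ℝ, ∀ ρ : ℝ, 0 < ρ → ρ ≤ 1 →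
      ∀ N₁ N₂ : ℕ, 1 ≤ N₁ → 1 ≤ N₂ →
        min (𝒵 (N₁ + N₂) ⌊ρ * ((N₁ + N₂ : ℕ) : ℝ)⌋₊ ω β)
            (𝒵 (N₁ + N₂) ⌈ρ * ((N₁ + N₂ : ℕ) : ℝ)⌉₊ ω β) ≥
          min (𝒵 N₁ ⌊ρ * (N₁ : ℝ)⌋₊ ω β) (𝒵 N₁ ⌈ρ * (N₁ : ℝ)⌉₊ ω β) *
          min (𝒵 N₂ ⌊ρ * (N₂ : ℝ)⌋₊ (fun n => ω (n + N₁)) β)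
              (𝒵 N₂ ⌈ρ * (N₂ : ℝ)⌉₊ (fun n => ω (n + N₁)) β) :=
  stmt_17_general P η hηmeas hηindep hηident hηpos τ hτ 𝒵 h𝒵
end

section
/- For every β ≥ 0 and every h ∈ ℝ: liminf_{N→∞} (1/N)·𝔼[ log Z^Ψ_{N,ω,β,h} ] ≥ H(0), where Z^Ψ_{N,ω,β,h} := E[exp( Σ_{j=1}^N (β·ω_j + h)·δ_j )·Ψ(Σ_{j=1}^N δ_j, N)·δ_N] (expectation over τ only, with ω fixed). -/
/-
Fix `s ≥ 2` and force the renewal process onto the single path made of `N / s - 1` steps of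
length `s` followed by one step of length `s + N % s`, which ends at `N`. On this event the
integrand of `Z` is deterministic up to the disorder collected at the `N / s` renewal points, so
`log Z ≥ (disorder sum) + log Ψ(N / s, N) + log P(path)`, and the disorder sum has mean
`(N / s) * h` because `ω` is centred. Dividing by `N`, the lower bound on `Q` and the continuity
of `H` give `liminf ≥ H(1/s) + (h + log K(s) - 1) / s`; the polynomial tail of `K` makes
`log K(s) / s → 0`, so letting `s → ∞` gives `H(0)`.
-/

open MeasureTheory ProbabilityTheory Filter Set
open scoped ENNReal Classical Topology

lemma Finset.sum_range_succ_ite_eq {α : Type*} [AddCommMonoid α] (f : ℕ → α) (m s R : ℕ) :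
    ∑ j ∈ Finset.range (m + 1), f (if j = m then R else s) = m • f s + f R := by
  rw [Finset.sum_range_succ, if_pos rfl, Finset.sum_congr rfl fun j hj =>
    by rw [if_neg (Finset.mem_range.1 hj).ne], Finset.sum_const, Finset.card_range]

namespace Renewal

lemma monotone_sum_range (a : ℕ → ℕ) : Monotone fun k => ∑ j ∈ Finset.range k, a j :=
  monotone_nat_of_le_succ fun k => by simp [Finset.sum_range_succ]

lemma strictMonoOn_sum_range {a : ℕ → ℕ} {M : ℕ} (ha : ∀ j < M, 0 < a j) :
    StrictMonoOn (fun k => ∑ j ∈ Finset.range k, a j) (Iic M) :=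
  strictMonoOn_Iic_of_lt_succ fun j hj => by simpa [Finset.sum_range_succ] using ha j hj

lemma filter_exists_eq_eq_image {τ : ℕ → ℕ} (h0 : τ 0 = 0) (hmono : Monotone τ) {M : ℕ}
    (hstrict : StrictMonoOn τ (Iic M)) :
    (Finset.Icc 1 (τ M)).filter (fun n => ∃ k, τ k = n) = (Finset.Icc 1 M).image τ := by
  ext n
  simp only [Finset.mem_filter, Finset.mem_Icc, Finset.mem_image]
  constructor
  · rintro ⟨⟨hn1, hnM⟩, k, rfl⟩
    have hk : k ≠ 0 := by rintro rfl; omega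
    rcases le_or_gt k M with hkM | hMk
    · exact ⟨k, ⟨by omega, hkM⟩, rfl⟩
    · have hM : M ≠ 0 := by rintro rfl; omega
      exact ⟨M, ⟨by omega, le_rfl⟩, le_antisymm (hmono hMk.le) hnM⟩
  · rintro ⟨k, ⟨hk1, hkM⟩, rfl⟩
    have hpos : τ 0 < τ k := hstrict (by simp) hkM (by omega)
    exact ⟨⟨by omega, hmono hkM⟩, k, rfl⟩

lemma filter_exists_sum_range_eq {b : ℕ → ℕ} {M : ℕ} (hb : ∀ j < M, 0 < b j) :
    (Finset.Icc 1 (∑ j ∈ Finset.range M, b j)).filter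
        (fun n => ∃ k, ∑ j ∈ Finset.range k, b j = n) =
      (Finset.Icc 1 M).image fun k => ∑ j ∈ Finset.range k, b j :=
  filter_exists_eq_eq_image (by simp) (monotone_sum_range b) (strictMonoOn_sum_range hb)

end Renewal

lemma measureReal_biInter_preimage_singleton {Ω α ι : Type*} [MeasurableSpace Ω]
    [MeasurableSpace α] [MeasurableSingletonClass α] {P : Measure Ω} {η : ι → Ω → α}
    (hmeas : ∀ j, Measurable (η j)) (hindep : iIndepFun η P) {i₀ : ι}
    (hident : ∀ j, P.map (η j) = P.map (η i₀)) (S : Finset ι) (a : ι → α) :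
    P.real (⋂ j ∈ S, η j ⁻¹' {a j}) = ∏ j ∈ S, P.real (η i₀ ⁻¹' {a j}) := by
  have hprod := hindep.meas_biInter (S := S) (s := fun j => η j ⁻¹' {a j})
    fun j _ => ⟨{a j}, measurableSet_singleton _, rfl⟩
  simp only [measureReal_def, hprod, ENNReal.toReal_prod]
  refine Finset.prod_congr rfl fun j _ => ?_
  rw [← Measure.map_apply (hmeas j) (measurableSet_singleton _), hident j,
    Measure.map_apply (hmeas i₀) (measurableSet_singleton _)]

lemma integrable_sum_Icc_and_integral_eq {Ω : Type*} [MeasurableSpace Ω] {P : Measure Ω}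
    [IsProbabilityMeasure P] {ω : ℕ → Ω → ℝ} (hint : ∀ j, 1 ≤ j → Integrable (ω j) P)
    (hmean : ∀ j, 1 ≤ j → ∫ y, ω j y ∂P = 0) (β h : ℝ) {M : ℕ} {σ : ℕ → ℕ}
    (hσ : ∀ k ∈ Finset.Icc 1 M, 1 ≤ σ k) :
    Integrable (fun y => ∑ k ∈ Finset.Icc 1 M, (β * ω (σ k) y + h)) P ∧
      ∫ y, ∑ k ∈ Finset.Icc 1 M, (β * ω (σ k) y + h) ∂P = M * h := by
  have hterm : ∀ k ∈ Finset.Icc 1 M, Integrable (fun y => β * ω (σ k) y + h) P :=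
    fun k hk => ((hint _ (hσ k hk)).const_mul β).add (integrable_const h)
  refine ⟨integrable_finsetSum _ hterm, ?_⟩
  rw [integral_finsetSum _ hterm, Finset.sum_congr rfl fun k hk => by
    rw [integral_add ((hint _ (hσ k hk)).const_mul β) (integrable_const h), integral_const_mul,
      hmean _ (hσ k hk)]]
  simp

lemma natDiv_div_mem_Icc {s N : ℕ} (hs : 0 < s) (hN : s ≤ N) :
    ((N / s : ℕ) : ℝ) / N ∈ Icc (1 / (2 * (s : ℝ))) (1 / s) := by
  have hdiv := Nat.div_add_mod N s
  have hM : 1 ≤ N / s := (Nat.one_le_div_iff hs).2 hN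
  have hle : N ≤ 2 * s * (N / s) := by nlinarith [Nat.mod_lt N hs]
  have hNR : (0 : ℝ) < N := by exact_mod_cast hs.trans_le hN
  constructor
  · rw [div_le_div_iff₀ (by positivity) hNR]
    exact_mod_cast (by linarith : 1 * N ≤ N / s * (2 * s))
  · rw [div_le_div_iff₀ hNR (by positivity)]
    exact_mod_cast (by rw [one_mul, mul_comm]; exact Nat.le.intro hdiv : N / s * s ≤ 1 * N)

lemma tendsto_natDiv_div_atTop {s : ℕ} (hs : 0 < s) :
    Tendsto (fun N : ℕ => ((N / s : ℕ) : ℝ) / N) atTop (𝓝 (1 / s)) := by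
  have hsR : (0 : ℝ) < s := Nat.cast_pos.2 hs
  have hlim := (tendsto_nat_floor_div_atTop.comp
    (tendsto_natCast_atTop_atTop.atTop_div_const hsR)).mul_const (1 / (s : ℝ))
  rw [one_mul] at hlim
  refine hlim.congr' (eventually_ne_atTop 0 |>.mono fun N hN => ?_)
  have hNR : (N : ℝ) ≠ 0 := Nat.cast_ne_zero.2 hN
  simp only [Function.comp_apply, Nat.floor_div_eq_div]
  field_simp

lemma tendsto_apply_mod_div_atTop (g : ℕ → ℝ) {s : ℕ} (hs : 0 < s) :
    Tendsto (fun N : ℕ => g (N % s) / N) atTop (𝓝 0) := by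
  have hbdd : IsBoundedUnder (· ≤ ·) atTop fun N : ℕ => ‖g (N % s)‖ :=
    isBoundedUnder_of ⟨∑ i ∈ Finset.range s, ‖g i‖, fun N =>
      Finset.single_le_sum (fun i _ => norm_nonneg (g i)) (Finset.mem_range.2 (Nat.mod_lt N hs))⟩
  simpa [div_eq_inv_mul] using tendsto_inv_atTop_nhds_zero_nat.zero_mul_isBoundedUnder_le hbdd

lemma eventually_pos_of_tendsto_mul_rpow {K : ℕ → ℝ} {p C : ℝ} (hC : 0 < C)
    (hK : Tendsto (fun n : ℕ => K n * (n : ℝ) ^ p) atTop (𝓝 C)) : ∀ᶠ n in atTop, 0 < K n := by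
  filter_upwards [hK.eventually (lt_mem_nhds hC), eventually_gt_atTop 0] with n hn hn0
  exact pos_of_mul_pos_left hn (Real.rpow_nonneg (Nat.cast_nonneg n) p)

lemma tendsto_log_div_of_tendsto_mul_rpow {K : ℕ → ℝ} {p C : ℝ} (hC : 0 < C)
    (hK : Tendsto (fun n : ℕ => K n * (n : ℝ) ^ p) atTop (𝓝 C)) :
    Tendsto (fun n : ℕ => Real.log (K n) / n) atTop (𝓝 0) := by
  have hlogK := ((Real.continuousAt_log hC.ne').tendsto.comp hK).div_atTop
    tendsto_natCast_atTop_atTop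
  have hlogn : Tendsto (fun n : ℕ => Real.log n / n) atTop (𝓝 0) :=
    Real.isLittleO_log_id_atTop.tendsto_div_nhds_zero.comp tendsto_natCast_atTop_atTop
  have hlim := hlogK.sub (hlogn.const_mul p)
  rw [mul_zero, sub_zero] at hlim
  refine hlim.congr' ?_
  filter_upwards [eventually_pos_of_tendsto_mul_rpow hC hK, eventually_gt_atTop 0] with n hn hn0
  have hnR : (0 : ℝ) < n := Nat.cast_pos.2 hn0
  simp only [Function.comp_apply]
  rw [Real.log_mul hn.ne' (Real.rpow_pos_of_pos hnR p).ne', Real.log_rpow hnR]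
  ring

lemma EReal.tendsto_coe_add_of_tendsto_zero {ι : Type*} {l : Filter ι} {f g : ι → ℝ}
    {x : EReal} (hf : Tendsto (fun i => (f i : EReal)) l (𝓝 x)) (hg : Tendsto g l (𝓝 0)) :
    Tendsto (fun i => ((f i + g i : ℝ) : EReal)) l (𝓝 x) := by
  have := (EReal.continuousAt_add (p := (x, 0)) (Or.inr (by simp)) (Or.inr (by simp))).tendsto
    |>.comp (hf.prodMk_nhds (EReal.tendsto_coe.2 hg))
  simpa [Function.comp_def] using this

section PartitionFunction

variable {Ω Ω' : Type*}

/-- The integrand of `Z^Ψ_{N,ω,β,h}` at disorder `y` and renewal configuration `x`; `LN N x`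
stands for the number `∑_{j ≤ N} δ_j` of renewal points in `[1, N]`. -/
noncomputable def boltzmannWeight (τ LN : ℕ → Ω → ℕ) (Ψ : ℕ → ℕ → ℝ) (ω : ℕ → Ω' → ℝ)
    (β h : ℝ) (N : ℕ) (y : Ω') (x : Ω) : ℝ :=
  Real.exp (∑ j ∈ Finset.Icc 1 N, (β * ω j y + h) * (if ∃ k, τ k x = j then (1:ℝ) else 0)) *
    Ψ (LN N x) N * (if ∃ k, τ k x = N then (1:ℝ) else 0)

noncomputable def partitionFunction [MeasurableSpace Ω] (P : Measure Ω) (τ LN : ℕ → Ω → ℕ)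
    (Ψ : ℕ → ℕ → ℝ) (ω : ℕ → Ω' → ℝ) (β h : ℝ) (N : ℕ) (y : Ω') : ℝ :=
  ∫ x, boltzmannWeight τ LN Ψ ω β h N y x ∂P

variable {τ LN : ℕ → Ω → ℕ} {Ψ : ℕ → ℕ → ℝ} {ω : ℕ → Ω' → ℝ} {β h : ℝ} {N : ℕ}

lemma boltzmannWeight_nonneg (hΨ : ∀ m N, 0 ≤ Ψ m N) (y : Ω') (x : Ω) :
    0 ≤ boltzmannWeight τ LN Ψ ω β h N y x := by
  have := hΨ (LN N x) N
  unfold boltzmannWeight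
  split_ifs <;> positivity

lemma boltzmannWeight_le (hΨ : ∀ m N, 0 ≤ Ψ m N)
    (hLN : ∀ x, LN N x = ((Finset.Icc 1 N).filter (fun n => ∃ k, τ k x = n)).card)
    (y : Ω') (x : Ω) :
    boltzmannWeight τ LN Ψ ω β h N y x ≤
      Real.exp (∑ j ∈ Finset.Icc 1 N, (|β| * |ω j y| + |h|)) *
        ∑ m ∈ Finset.range (N + 1), Ψ m N := by
  have hexp : ∑ j ∈ Finset.Icc 1 N, (β * ω j y + h) * (if ∃ k, τ k x = j then (1:ℝ) else 0) ≤
      ∑ j ∈ Finset.Icc 1 N, (|β| * |ω j y| + |h|) := by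
    refine Finset.sum_le_sum fun j _ => ?_
    have : |β * ω j y + h| ≤ |β| * |ω j y| + |h| := (abs_add_le _ _).trans_eq (by rw [abs_mul])
    split_ifs
    · linarith [le_abs_self (β * ω j y + h)]
    · rw [mul_zero]; positivity
  have hLN_le : LN N x ≤ N := (hLN x).trans_le ((Finset.card_filter_le _ _).trans (by simp))
  have hΨ_le : Ψ (LN N x) N ≤ ∑ m ∈ Finset.range (N + 1), Ψ m N :=
    Finset.single_le_sum (fun m _ => hΨ m N) (Finset.mem_range.2 (Nat.lt_succ_of_le hLN_le))
  have hδ : (if ∃ k, τ k x = N then (1:ℝ) else 0) ≤ 1 := by split_ifs <;> norm_num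
  unfold boltzmannWeight
  calc _ ≤ Real.exp (∑ j ∈ Finset.Icc 1 N, (|β| * |ω j y| + |h|)) *
        (∑ m ∈ Finset.range (N + 1), Ψ m N) * 1 := by
        gcongr
        exacts [mul_nonneg (Real.exp_pos _).le (Finset.sum_nonneg fun m _ => hΨ m N), hΨ _ _]
    _ = _ := mul_one _

lemma boltzmannWeight_eq_of_path {η : ℕ → Ω → ℕ}
    (hτ : ∀ m x, τ m x = ∑ j ∈ Finset.range m, η j x)
    (hLN : ∀ x, LN N x = ((Finset.Icc 1 N).filter (fun n => ∃ k, τ k x = n)).card)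
    {a : ℕ → ℕ} {M : ℕ} (ha : ∀ j < M, 0 < a j) (hN : ∑ j ∈ Finset.range M, a j = N)
    (y : Ω') {x : Ω} (hx : ∀ j < M, η j x = a j) :
    boltzmannWeight τ LN Ψ ω β h N y x =
      Real.exp (∑ k ∈ Finset.Icc 1 M, (β * ω (∑ j ∈ Finset.range k, a j) y + h)) * Ψ M N := by
  have hsum : ∀ k ≤ M, ∑ j ∈ Finset.range k, η j x = ∑ j ∈ Finset.range k, a j := fun k hk =>
    Finset.sum_congr rfl fun j hj => hx j ((Finset.mem_range.1 hj).trans_le hk)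
  have hinj : InjOn (fun k => ∑ j ∈ Finset.range k, a j) (Finset.Icc 1 M) :=
    (Renewal.strictMonoOn_sum_range ha).injOn.mono fun k hk => (Finset.mem_Icc.1 hk).2
  have hset : (Finset.Icc 1 N).filter (fun n => ∃ k, τ k x = n) =
      (Finset.Icc 1 M).image fun k => ∑ j ∈ Finset.range k, a j := by
    simp only [hτ]
    rw [← hN, ← hsum M le_rfl,
      Renewal.filter_exists_sum_range_eq fun j hj => (hx j hj).symm ▸ ha j hj]
    exact Finset.image_congr fun k hk => hsum k (Finset.mem_Icc.1 hk).2
  have hδN : ∃ k, τ k x = N := ⟨M, by rw [hτ, hsum M le_rfl, hN]⟩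
  unfold boltzmannWeight
  simp only [mul_ite, mul_one, mul_zero]
  rw [← Finset.sum_filter, hset, Finset.sum_image hinj, hLN, hset,
    Finset.card_image_of_injOn hinj, Nat.card_Icc, Nat.add_sub_cancel, if_pos hδN]

variable [MeasurableSpace Ω] [MeasurableSpace Ω'] {P : Measure Ω} {η : ℕ → Ω → ℕ}

lemma measurable_of_eq_sum_range (hη : ∀ j, Measurable (η j))
    (hτ : ∀ m x, τ m x = ∑ j ∈ Finset.range m, η j x) (m : ℕ) : Measurable (τ m) := by
  simp only [funext (hτ m)]
  exact Finset.measurable_sum _ fun j _ => hη j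

lemma measurableSet_exists_eq (hτ : ∀ k, Measurable (τ k)) (n : ℕ) :
    MeasurableSet {x | ∃ k, τ k x = n} := by
  simp only [ofPred_exists]
  exact .iUnion fun k => (hτ k) (measurableSet_singleton n)

lemma measurable_boltzmannWeight (hτ : ∀ k, Measurable (τ k))
    (hLN : ∀ x, LN N x = ((Finset.Icc 1 N).filter (fun n => ∃ k, τ k x = n)).card)
    (hω : ∀ j, Measurable (ω j)) :
    Measurable fun p : Ω' × Ω => boltzmannWeight τ LN Ψ ω β h N p.1 p.2 := by
  have hD := measurableSet_exists_eq hτ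
  have hLNmeas : Measurable (LN N) := by
    simp only [funext hLN, Finset.card_filter]
    exact Finset.measurable_sum _ fun n _ => Measurable.ite (hD n) measurable_const measurable_const
  have hδ : ∀ n, Measurable fun p : Ω' × Ω => if ∃ k, τ k p.2 = n then (1:ℝ) else 0 := fun n =>
    Measurable.ite ((hD n).preimage measurable_snd) measurable_const measurable_const
  unfold boltzmannWeight
  fun_prop

lemma integrable_boltzmannWeight [IsFiniteMeasure P] (hτ : ∀ k, Measurable (τ k))
    (hLN : ∀ x, LN N x = ((Finset.Icc 1 N).filter (fun n => ∃ k, τ k x = n)).card)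
    (hω : ∀ j, Measurable (ω j)) (hΨ : ∀ m N, 0 ≤ Ψ m N) (y : Ω') :
    Integrable (boltzmannWeight τ LN Ψ ω β h N y) P :=
  (integrable_const (Real.exp (∑ j ∈ Finset.Icc 1 N, (|β| * |ω j y| + |h|)) *
    ∑ m ∈ Finset.range (N + 1), Ψ m N)).mono'
    (measurable_boltzmannWeight hτ hLN hω).of_uncurry_left.aestronglyMeasurable
    (ae_of_all _ fun x => by
      rw [Real.norm_of_nonneg (boltzmannWeight_nonneg hΨ y x)]
      exact boltzmannWeight_le hΨ hLN y x)

lemma measurable_partitionFunction [SFinite P] (hτ : ∀ k, Measurable (τ k))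
    (hLN : ∀ x, LN N x = ((Finset.Icc 1 N).filter (fun n => ∃ k, τ k x = n)).card)
    (hω : ∀ j, Measurable (ω j)) : Measurable (partitionFunction P τ LN Ψ ω β h N) :=
  (measurable_boltzmannWeight hτ hLN hω).stronglyMeasurable.integral_prod_right'.measurable

lemma partitionFunction_ge_of_path [IsFiniteMeasure P] (hη : ∀ j, Measurable (η j))
    (hindep : iIndepFun η P) (hident : ∀ j, P.map (η j) = P.map (η 0))
    {K : ℕ → ℝ} (hK : ∀ n, K n = (P {x | η 0 x = n}).toReal)
    (hτ : ∀ m x, τ m x = ∑ j ∈ Finset.range m, η j x)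
    (hLN : ∀ x, LN N x = ((Finset.Icc 1 N).filter (fun n => ∃ k, τ k x = n)).card)
    (hω : ∀ j, Measurable (ω j)) (hΨ : ∀ m N, 0 ≤ Ψ m N)
    {a : ℕ → ℕ} {M : ℕ} (ha : ∀ j < M, 0 < a j) (hN : ∑ j ∈ Finset.range M, a j = N)
    (y : Ω') :
    Real.exp (∑ k ∈ Finset.Icc 1 M, (β * ω (∑ j ∈ Finset.range k, a j) y + h)) * Ψ M N *
      ∏ j ∈ Finset.range M, K (a j) ≤ partitionFunction P τ LN Ψ ω β h N y := by
  set A := ⋂ j ∈ Finset.range M, η j ⁻¹' {a j}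
  have hA : MeasurableSet A :=
    .biInter (Finset.range M).countable_toSet fun j _ => hη j (measurableSet_singleton _)
  have hPA : P.real A = ∏ j ∈ Finset.range M, K (a j) := by
    rw [measureReal_biInter_preimage_singleton hη hindep hident]
    exact Finset.prod_congr rfl fun j _ => (hK _).symm
  have hpath : EqOn (boltzmannWeight τ LN Ψ ω β h N y)
      (fun _ => Real.exp (∑ k ∈ Finset.Icc 1 M, (β * ω (∑ j ∈ Finset.range k, a j) y + h)) *
        Ψ M N) A := fun x hx =>
    boltzmannWeight_eq_of_path hτ hLN ha hN y fun j hj =>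
      mem_iInter₂.1 hx j (Finset.mem_range.2 hj)
  calc _ = ∫ x in A, boltzmannWeight τ LN Ψ ω β h N y x ∂P := by
        rw [setIntegral_congr_fun hA hpath, setIntegral_const, hPA, smul_eq_mul, mul_comm]
    _ ≤ _ := setIntegral_le_integral
        (integrable_boltzmannWeight (measurable_of_eq_sum_range hη hτ) hLN hω hΨ y)
        (ae_of_all _ (boltzmannWeight_nonneg hΨ y))

lemma log_partitionFunction_le [IsProbabilityMeasure P] (hτ : ∀ k, Measurable (τ k))
    (hLN : ∀ x, LN N x = ((Finset.Icc 1 N).filter (fun n => ∃ k, τ k x = n)).card)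
    (hω : ∀ j, Measurable (ω j)) (hΨ : ∀ m N, 0 ≤ Ψ m N) {y : Ω'}
    (hpos : 0 < partitionFunction P τ LN Ψ ω β h N y) :
    Real.log (partitionFunction P τ LN Ψ ω β h N y) ≤
      ∑ j ∈ Finset.Icc 1 N, (|β| * |ω j y| + |h|) +
        Real.log (∑ m ∈ Finset.range (N + 1), Ψ m N) := by
  have hle : partitionFunction P τ LN Ψ ω β h N y ≤
      Real.exp (∑ j ∈ Finset.Icc 1 N, (|β| * |ω j y| + |h|)) *
        ∑ m ∈ Finset.range (N + 1), Ψ m N :=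
    (integral_mono (integrable_boltzmannWeight hτ hLN hω hΨ y) (integrable_const _)
      (boltzmannWeight_le hΨ hLN y)).trans_eq (by simp)
  have hC := pos_of_mul_pos_right (hpos.trans_le hle) (Real.exp_pos _).le
  calc _ ≤ _ := Real.log_le_log hpos hle
    _ = _ := by rw [Real.log_mul (Real.exp_pos _).ne' hC.ne', Real.log_exp]

lemma integral_log_partitionFunction_ge_of_path [IsProbabilityMeasure P] {P' : Measure Ω'}
    [IsProbabilityMeasure P'] (hη : ∀ j, Measurable (η j)) (hindep : iIndepFun η P)
    (hident : ∀ j, P.map (η j) = P.map (η 0))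
    {K : ℕ → ℝ} (hK : ∀ n, K n = (P {x | η 0 x = n}).toReal)
    (hτ : ∀ m x, τ m x = ∑ j ∈ Finset.range m, η j x)
    (hLN : ∀ x, LN N x = ((Finset.Icc 1 N).filter (fun n => ∃ k, τ k x = n)).card)
    (hω : ∀ j, Measurable (ω j)) (hωint : ∀ j, 1 ≤ j → Integrable (ω j) P')
    (hωmean : ∀ j, 1 ≤ j → ∫ y, ω j y ∂P' = 0) (hΨ : ∀ m N, 0 ≤ Ψ m N)
    {a : ℕ → ℕ} {M : ℕ} (ha : ∀ j < M, 0 < a j) (hN : ∑ j ∈ Finset.range M, a j = N)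
    (hKa : ∀ j < M, 0 < K (a j)) (hΨM : 0 < Ψ M N) :
    M * h + Real.log (Ψ M N) + ∑ j ∈ Finset.range M, Real.log (K (a j)) ≤
      ∫ y, Real.log (partitionFunction P τ LN Ψ ω β h N y) ∂P' := by
  set Z := partitionFunction P τ LN Ψ ω β h N
  set W := fun y => ∑ k ∈ Finset.Icc 1 M, (β * ω (∑ j ∈ Finset.range k, a j) y + h)
  set c := Real.log (Ψ M N) + ∑ j ∈ Finset.range M, Real.log (K (a j))
  have hτmeas := measurable_of_eq_sum_range hη hτ
  obtain ⟨hWint, hWmean⟩ := integrable_sum_Icc_and_integral_eq hωint hωmean β h fun k hk =>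
    (Renewal.strictMonoOn_sum_range ha) (by simp) (Finset.mem_Icc.1 hk).2 (Finset.mem_Icc.1 hk).1
  have hc : Real.exp c = Ψ M N * ∏ j ∈ Finset.range M, K (a j) := by
    rw [Real.exp_add, Real.exp_log hΨM, Real.exp_sum]
    exact congrArg _ <| Finset.prod_congr rfl fun j hj =>
      Real.exp_log (hKa j (Finset.mem_range.1 hj))
  have hlow : ∀ y, Real.exp (W y + c) ≤ Z y := fun y => by
    rw [Real.exp_add, hc, ← mul_assoc]
    exact partitionFunction_ge_of_path hη hindep hident hK hτ hLN hω hΨ ha hN y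
  have hpos : ∀ y, 0 < Z y := fun y => (Real.exp_pos _).trans_le (hlow y)
  have hlog : ∀ y, W y + c ≤ Real.log (Z y) := fun y =>
    (Real.le_log_iff_exp_le (hpos y)).2 (hlow y)
  have hlogint : Integrable (fun y => Real.log (Z y)) P' :=
    integrable_of_le_of_le
      (Real.measurable_log.comp (measurable_partitionFunction hτmeas hLN hω)).aestronglyMeasurable
      (ae_of_all _ hlog) (ae_of_all _ fun y => log_partitionFunction_le hτmeas hLN hω hΨ (hpos y))
      (hWint.add (integrable_const c))
      ((integrable_finsetSum _ fun j hj => ((hωint j (Finset.mem_Icc.1 hj).1).abs.const_mul _).add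
        (integrable_const _)).add (integrable_const _))
  calc _ = ∫ y, (W y + c) ∂P' := by
        rw [integral_add hWint (integrable_const c), hWmean, add_assoc]
        simp [c]
    _ ≤ _ := integral_mono (hWint.add (integrable_const c)) hlogint hlog

end PartitionFunction

def DominatesPaths (K : ℕ → ℝ) (Ψ : ℕ → ℕ → ℝ) (h : ℝ) (F : ℕ → ℝ) : Prop :=
  ∀ N (a : ℕ → ℕ) M, (∀ j < M, 0 < a j) → ∑ j ∈ Finset.range M, a j = N →
    (∀ j < M, 0 < K (a j)) → 0 < Ψ M N →
    M * h + Real.log (Ψ M N) + ∑ j ∈ Finset.range M, Real.log (K (a j)) ≤ F N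

namespace DominatesPaths

variable {F K : ℕ → ℝ} {Q Ψ : ℕ → ℕ → ℝ} {Hr : ℝ → ℝ} {h c : ℝ} {s : ℕ}

lemma le_div (hF : DominatesPaths K Ψ h F) (hs : 2 ≤ s) (hKpos : ∀ n, s ≤ n → 0 < K n)
    (hc : 0 < c) (hQ : ∀ N m : ℕ, (m : ℝ) / N ∈ Icc (1 / (2 * (s : ℝ))) (1 / s) →
      c * Real.exp (-(1 / s) * N) ≤ Q m N)
    (hΨ : ∀ m N : ℕ, (m : ℝ) / N ∈ Ioo 0 1 → Ψ m N = Q m N * Real.exp (N * Hr (m / N)))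
    {N : ℕ} (hN : s ≤ N) :
    ((N / s : ℕ) : ℝ) / N * (h + Real.log (K s)) + Hr (((N / s : ℕ) : ℝ) / N) - 1 / s +
      (Real.log c + Real.log (K (s + N % s)) - Real.log (K s)) / N ≤ F N / N := by
  have hMN := natDiv_div_mem_Icc (by omega) hN
  obtain ⟨m, hm⟩ : ∃ m, N / s = m + 1 := ⟨N / s - 1, by have := Nat.div_pos hN (by omega); omega⟩
  have hsplit : m * s + (s + N % s) = N := by linarith [hm ▸ Nat.div_add_mod N s]
  rw [hm] at hMN ⊢
  have hsR : (2 : ℝ) ≤ s := by exact_mod_cast hs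
  have hNR : (0 : ℝ) < N := by exact_mod_cast (show 0 < N by omega)
  have hΨM := hΨ (m + 1) N ⟨by positivity,
    hMN.2.trans_lt (by rw [div_lt_one (by positivity)]; linarith)⟩
  have hQpos : 0 < Q (m + 1) N := (by positivity : 0 < c * _).trans_le (hQ N (m + 1) hMN)
  have hlogΨ : Real.log c - N / s + N * Hr (((m + 1 : ℕ) : ℝ) / N) ≤
      Real.log (Ψ (m + 1) N) := by
    have := Real.log_le_log (by positivity) (hQ N (m + 1) hMN)
    rw [Real.log_mul hc.ne' (Real.exp_pos _).ne', Real.log_exp] at this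
    rw [hΨM, Real.log_mul hQpos.ne' (Real.exp_pos _).ne', Real.log_exp]
    linarith [show -(1 / (s : ℝ)) * N = -(N / s) by ring]
  set a : ℕ → ℕ := fun j => if j = m then s + N % s else s
  have ha : ∀ j < m + 1, s ≤ a j := fun j _ => by simp only [a]; split_ifs <;> omega
  have hpath := hF N a (m + 1) (fun j hj => by have := ha j hj; omega)
    (by simpa [hsplit] using Finset.sum_range_succ_ite_eq (fun n => n) m s (s + N % s))
    (fun j hj => hKpos _ (ha j hj)) (by rw [hΨM]; positivity)
  rw [Finset.sum_range_succ_ite_eq (fun n => Real.log (K n)), nsmul_eq_mul] at hpath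
  rw [le_div_iff₀ hNR]
  have hexpand : (((m + 1 : ℕ) : ℝ) / N * (h + Real.log (K s)) + Hr (((m + 1 : ℕ) : ℝ) / N) -
      1 / s + (Real.log c + Real.log (K (s + N % s)) - Real.log (K s)) / N) * N =
      ((m + 1 : ℕ) : ℝ) * h + (Real.log c - N / s + N * Hr (((m + 1 : ℕ) : ℝ) / N)) +
        (m * Real.log (K s) + Real.log (K (s + N % s))) := by
    field_simp
    push_cast
    ring
  linarith

lemma le_liminf_of_two_le (hF : DominatesPaths K Ψ h F) (hs : 2 ≤ s)
    (hKpos : ∀ n, s ≤ n → 0 < K n) (hc : 0 < c)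
    (hQ : ∀ N m : ℕ, (m : ℝ) / N ∈ Icc (1 / (2 * (s : ℝ))) (1 / s) →
      c * Real.exp (-(1 / s) * N) ≤ Q m N)
    (hΨ : ∀ m N : ℕ, (m : ℝ) / N ∈ Ioo 0 1 → Ψ m N = Q m N * Real.exp (N * Hr (m / N)))
    (hHr : ContinuousAt Hr (1 / s)) :
    ((Hr (1 / s) + (h + Real.log (K s) - 1) / s : ℝ) : EReal) ≤
      liminf (fun N : ℕ => ((1 / (N : ℝ) * F N : ℝ) : EReal)) atTop := by
  have hs0 : 0 < s := by omega
  have hM := tendsto_natDiv_div_atTop hs0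
  have hlim := (((hM.mul_const (h + Real.log (K s))).add (hHr.tendsto.comp hM)).sub_const
    (1 / (s : ℝ))).add (tendsto_apply_mod_div_atTop
      (fun r => Real.log c + Real.log (K (s + r)) - Real.log (K s)) hs0)
  rw [show 1 / (s : ℝ) * (h + Real.log (K s)) + Hr (1 / s) - 1 / s + 0 =
    Hr (1 / s) + (h + Real.log (K s) - 1) / s by ring] at hlim
  rw [← (EReal.tendsto_coe.2 hlim).liminf_eq]
  refine liminf_le_liminf ((eventually_ge_atTop s).mono fun N hN => EReal.coe_le_coe_iff.2 ?_)
  rw [one_div_mul_eq_div]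
  exact hF.le_div hs hKpos hc hQ hΨ hN

end DominatesPaths

lemma tendsto_coe_apply_one_div_atTop {H : ℝ → EReal} {Hr : ℝ → ℝ}
    (hHr : ∀ x ∈ Ioo (0 : ℝ) 1, H x = (Hr x : EReal)) (hH : ContinuousWithinAt H (Icc 0 1) 0) :
    Tendsto (fun s : ℕ => (Hr (1 / s) : EReal)) atTop (𝓝 (H 0)) := by
  have hinv : Tendsto (fun s : ℕ => 1 / (s : ℝ)) atTop (𝓝[Icc 0 1] 0) :=
    tendsto_nhdsWithin_iff.2 ⟨tendsto_one_div_atTop_nhds_zero_nat,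
      (eventually_ge_atTop 1).mono fun s hs => ⟨by positivity,
        div_le_one_of_le₀ (by exact_mod_cast hs) (by positivity)⟩⟩
  exact (hH.tendsto.comp hinv).congr' ((eventually_ge_atTop 2).mono fun s hs =>
    hHr _ ⟨by positivity, by rw [div_lt_one (by positivity)]; exact_mod_cast hs⟩)

lemma DominatesPaths.le_liminf {F K : ℕ → ℝ} {H : ℝ → EReal} {Hr : ℝ → ℝ}
    {Q Ψ : ℕ → ℕ → ℝ} {h α C_K : ℝ} (hF : DominatesPaths K Ψ h F) (hCK : 0 < C_K)
    (hKasymp : Tendsto (fun n : ℕ => K n * (n : ℝ) ^ (1 + α)) atTop (𝓝 C_K))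
    (hHr : ∀ x ∈ Ioo (0 : ℝ) 1, H x = (Hr x : EReal)) (hHcont : ContinuousOn H (Icc 0 1))
    (hQlb : ∀ u v : ℝ, 0 < u → u < v → v < 1 → ∀ b : ℝ, 0 < b →
      ∃ c : ℝ, 0 < c ∧ ∀ N m : ℕ, (m : ℝ) / N ∈ Icc u v → c * Real.exp (-b * N) ≤ Q m N)
    (hΨ : ∀ m N : ℕ, Ψ m N = if H ((m : ℝ) / N) = ⊥ then 0
      else Q m N * Real.exp ((N : ℝ) * (H ((m : ℝ) / N)).toReal)) :
    H 0 ≤ liminf (fun N : ℕ => ((1 / (N : ℝ) * F N : ℝ) : EReal)) atTop := by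
  have hΨr : ∀ m N : ℕ, (m : ℝ) / N ∈ Ioo 0 1 → Ψ m N = Q m N * Real.exp (N * Hr (m / N)) :=
    fun m N hmN => by rw [hΨ, hHr _ hmN, if_neg (EReal.coe_ne_bot _), EReal.toReal_coe]
  have hHrcont : ContinuousOn Hr (Ioo 0 1) := fun x hx => EReal.tendsto_coe.1
    ((hHcont.mono Ioo_subset_Icc_self x hx).congr (fun y hy => (hHr y hy).symm) (hHr x hx).symm)
  obtain ⟨n₀, hn₀⟩ := eventually_atTop.1 (eventually_pos_of_tendsto_mul_rpow hCK hKasymp)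
  have hrest : Tendsto (fun s : ℕ => (h + Real.log (K s) - 1) / s) atTop (𝓝 0) := by
    have := (tendsto_log_div_of_tendsto_mul_rpow hCK hKasymp).add
      (tendsto_const_div_atTop_nhds_zero_nat (h - 1))
    rw [add_zero] at this
    exact this.congr fun s => by ring
  refine le_of_tendsto (EReal.tendsto_coe_add_of_tendsto_zero
    (tendsto_coe_apply_one_div_atTop hHr (hHcont 0 ⟨le_rfl, zero_le_one⟩)) hrest) ?_
  filter_upwards [eventually_ge_atTop 2, eventually_ge_atTop n₀] with s hs hsn₀
  have hsR : (2 : ℝ) ≤ s := by exact_mod_cast hs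
  have hinv : 1 / (s : ℝ) ∈ Ioo 0 1 := ⟨by positivity, by rw [div_lt_one (by positivity)]; linarith⟩
  obtain ⟨c, hc, hQ⟩ := hQlb (1 / (2 * s)) (1 / s) (by positivity)
    (one_div_lt_one_div_of_lt (by positivity) (by linarith)) hinv.2 (1 / s) (by positivity)
  exact hF.le_liminf_of_two_le hs (fun n hn => hn₀ n (hsn₀.trans hn)) hc hQ hΨr
    (hHrcont.continuousAt (Ioo_mem_nhds hinv.1 hinv.2))

theorem stmt_19_general
    {Ω : Type*} [MeasurableSpace Ω] (P : Measure Ω) [IsProbabilityMeasure P]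
    (η : ℕ → Ω → ℕ) (hηmeas : ∀ j, Measurable (η j))
    (hηindep : iIndepFun η P)
    (hηident : ∀ j, P.map (η j) = P.map (η 0))
    (α C_K : ℝ) (hCK : 0 < C_K)
    (K : ℕ → ℝ) (hK : ∀ n, K n = (P {x | η 0 x = n}).toReal)
    (hKasymp : Tendsto (fun n : ℕ => K n * (n : ℝ) ^ (1 + α)) atTop (nhds C_K))
    (τ : ℕ → Ω → ℕ) (hτ : ∀ m x, τ m x = ∑ j ∈ Finset.range m, η j x)
    (H : ℝ → EReal) (Hr : ℝ → ℝ)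
    (hHr : ∀ x ∈ Set.Ioo (0:ℝ) 1, H x = (Hr x : EReal))
    (hHcont : ContinuousOn H (Set.Icc 0 1))
    (Q : ℕ → ℕ → ℝ) (hQnn : ∀ m N, 0 ≤ Q m N)
    (hQlb : ∀ u v : ℝ, 0 < u → u < v → v < 1 → ∀ b : ℝ, 0 < b →
      ∃ c : ℝ, 0 < c ∧ ∀ N m : ℕ, (m : ℝ) / N ∈ Set.Icc u v → c * Real.exp (-b * N) ≤ Q m N)
    (Ψ : ℕ → ℕ → ℝ)
    (hΨ : ∀ m N : ℕ, Ψ m N = if H ((m : ℝ) / N) = ⊥ then 0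
      else Q m N * Real.exp ((N : ℝ) * (H ((m : ℝ) / N)).toReal))
    (LN : ℕ → Ω → ℕ)
    (hLN : ∀ N x, LN N x = ((Finset.Icc 1 N).filter (fun n => ∃ k, τ k x = n)).card)
    {Ω' : Type*} [MeasurableSpace Ω'] (P' : Measure Ω') [IsProbabilityMeasure P']
    (ω : ℕ → Ω' → ℝ) (hωmeas : ∀ j, Measurable (ω j))
    (hωident : ∀ j, 1 ≤ j → P'.map (ω j) = P'.map (ω 1))
    (hωexp : ∀ s : ℝ, Integrable (fun y => Real.exp (s * ω 1 y)) P')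
    (hωmean : ∫ y, ω 1 y ∂P' = 0)
    (ZΨ : ℝ → ℝ → ℕ → Ω' → ℝ)
    (hZΨ : ∀ (β h : ℝ) (N : ℕ) (y : Ω'), ZΨ β h N y =
      ∫ x, Real.exp (∑ j ∈ Finset.Icc 1 N,
          (β * ω j y + h) * (if ∃ k, τ k x = j then (1:ℝ) else 0)) *
        Ψ (LN N x) N * (if ∃ k, τ k x = N then (1:ℝ) else 0) ∂P)
    :
    ∀ β : ℝ, 0 ≤ β → ∀ h : ℝ,
      H 0 ≤ Filter.liminf (fun N : ℕ =>
        (((1 / (N : ℝ)) * ∫ y, Real.log (ZΨ β h N y) ∂P' : ℝ) : EReal)) atTop := by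
  intro β _ h
  have hΨnn : ∀ m N, 0 ≤ Ψ m N := fun m N => by
    rw [hΨ]
    split_ifs
    exacts [le_rfl, mul_nonneg (hQnn m N) (Real.exp_pos _).le]
  have hω : ∀ j, 1 ≤ j → Integrable (ω j) P' ∧ ∫ y, ω j y ∂P' = 0 := fun j hj => by
    have hid : IdentDistrib (ω j) (ω 1) P' P' :=
      ⟨(hωmeas j).aemeasurable, (hωmeas 1).aemeasurable, hωident j hj⟩
    have hint : Integrable (ω 1) P' := by
      simpa using integrable_pow_of_integrable_exp_mul one_ne_zero (hωexp 1) (hωexp (-1)) 1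
    exact ⟨hid.integrable_iff.2 hint, hid.integral_eq.trans hωmean⟩
  have hF : DominatesPaths K Ψ h fun N => ∫ y, Real.log (ZΨ β h N y) ∂P' :=
    fun N a M ha hN hKa hΨM => by
      dsimp only
      rw [show ZΨ β h N = partitionFunction P τ LN Ψ ω β h N from funext (hZΨ β h N)]
      exact integral_log_partitionFunction_ge_of_path hηmeas hηindep hηident hK hτ (hLN N) hωmeas
        (fun j hj => (hω j hj).1) (fun j hj => (hω j hj).2) hΨnn ha hN hKa hΨM
  exact hF.le_liminf hCK hKasymp hHr hHcont hQlb hΨ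

theorem stmt_19
    {Ω : Type*} [MeasurableSpace Ω] (P : Measure Ω) [IsProbabilityMeasure P]
    (η : ℕ → Ω → ℕ) (hηmeas : ∀ j, Measurable (η j))
    (hηindep : iIndepFun η P)
    (hηident : ∀ j, P.map (η j) = P.map (η 0))
    (hηpos : ∀ j x, 1 ≤ η j x)
    (α C_K : ℝ) (hα : 0 < α) (hCK : 0 < C_K)
    (K : ℕ → ℝ) (hK : ∀ n, K n = (P {x | η 0 x = n}).toReal)
    (hKpos : ∀ n, 1 ≤ n → 0 < K n)
    (hKasymp : Tendsto (fun n : ℕ => K n * (n : ℝ) ^ (1 + α)) atTop (nhds C_K))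
    (τ : ℕ → Ω → ℕ) (hτ : ∀ m x, τ m x = ∑ j ∈ Finset.range m, η j x)
    (H : ℝ → EReal) (Hr : ℝ → ℝ)
    (hHr : ∀ x ∈ Set.Ioo (0:ℝ) 1, H x = (Hr x : EReal))
    (hHconc : ConcaveOn ℝ (Set.Ioo 0 1) Hr)
    (hHanal : AnalyticOnNhd ℝ Hr (Set.Ioo 0 1))
    (hHcont : ContinuousOn H (Set.Icc 0 1))
    (hHne_top : ∀ x ∈ Set.Icc (0:ℝ) 1, H x ≠ ⊤)
    (Q : ℕ → ℕ → ℝ) (hQnn : ∀ m N, 0 ≤ Q m N)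
    (hQub : ∀ b : ℝ, 0 < b → ∃ c : ℝ, 0 < c ∧ ∀ N m : ℕ, m ≤ N → Q m N ≤ c * Real.exp (b * N))
    (hQlb : ∀ u v : ℝ, 0 < u → u < v → v < 1 → ∀ b : ℝ, 0 < b →
      ∃ c : ℝ, 0 < c ∧ ∀ N m : ℕ, (m : ℝ) / N ∈ Set.Icc u v → c * Real.exp (-b * N) ≤ Q m N)
    (Ψ : ℕ → ℕ → ℝ)
    (hΨ : ∀ m N : ℕ, Ψ m N = if H ((m : ℝ) / N) = ⊥ then 0
      else Q m N * Real.exp ((N : ℝ) * (H ((m : ℝ) / N)).toReal))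
    (LN : ℕ → Ω → ℕ)
    (hLN : ∀ N x, LN N x = ((Finset.Icc 1 N).filter (fun n => ∃ k, τ k x = n)).card)
    {Ω' : Type*} [MeasurableSpace Ω'] (P' : Measure Ω') [IsProbabilityMeasure P']
    (ω : ℕ → Ω' → ℝ) (hωmeas : ∀ j, Measurable (ω j))
    (hωindep : iIndepFun ω P')
    (hωident : ∀ j, 1 ≤ j → P'.map (ω j) = P'.map (ω 1))
    (hωexp : ∀ s : ℝ, Integrable (fun y => Real.exp (s * ω 1 y)) P')
    (hωmean : ∫ y, ω 1 y ∂P' = 0)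
    (hωvar : ∫ y, (ω 1 y) ^ 2 ∂P' = 1)
    (ZΨ : ℝ → ℝ → ℕ → Ω' → ℝ)
    (hZΨ : ∀ (β h : ℝ) (N : ℕ) (y : Ω'), ZΨ β h N y =
      ∫ x, Real.exp (∑ j ∈ Finset.Icc 1 N,
          (β * ω j y + h) * (if ∃ k, τ k x = j then (1:ℝ) else 0)) *
        Ψ (LN N x) N * (if ∃ k, τ k x = N then (1:ℝ) else 0) ∂P)
    :
    ∀ β : ℝ, 0 ≤ β → ∀ h : ℝ,
      H 0 ≤ Filter.liminf (fun N : ℕ =>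
        (((1 / (N : ℝ)) * ∫ y, Real.log (ZΨ β h N y) ∂P' : ℝ) : EReal)) atTop :=
  stmt_19_general P η hηmeas hηindep hηident α C_K hCK K hK hKasymp τ hτ H Hr hHr hHcont Q hQnn hQlb
    Ψ hΨ LN hLN P' ω hωmeas hωident hωexp hωmean ZΨ hZΨ
end
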